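/- arXiv:1904.01913 — 3 statements merged into one kernel-verified Lean document; each statement's English description precedes it below -/
import Mathlib

section
/- Let P = (E, ρ) be a (q,m)-polymatroid. Define ρ* : Σ(E) → ℕ by ρ*(X) = ρ(X^⊥) + m·dim X − ρ(E) for X ∈ Σ(E). Then (E, ρ*) is also a (q,m)-polymatroid, i.e. ρ* satisfies axioms (R1), (R2) and (R3). -/
set_option linter.unusedSectionVars false

open Module Matrix

variable {F : Type*} [Field F] [Fintype F] {n : ℕ}

/-- The orthogonal complement of a subspace of `𝔽_q^n` with respect to the standard dot product. -/
def perp (X : Submodule F (Fin n → F)) : Submodule F (Fin n → F) where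
  carrier := {x | ∀ y ∈ X, dotProduct x y = 0}
  add_mem' := fun {a b} ha hb y hy => by
    rw [Set.mem_setOf_eq] at *
    rw [add_dotProduct, ha y hy, hb y hy, add_zero]
  zero_mem' := fun y hy => zero_dotProduct y
  smul_mem' := fun c a ha y hy => by
    rw [Set.mem_setOf_eq] at *
    rw [smul_dotProduct, ha y hy, smul_zero]

/-- The dual rank function `ρ*(X) = ρ(X^⊥) + m·dim X − ρ(E)`. -/
noncomputable def dualRho (m : ℕ) (rho : Submodule F (Fin n → F) → ℤ) (X : Submodule F (Fin n → F)) : ℤ :=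
  rho (perp X) + (m : ℤ) * (finrank F X : ℤ) - rho ⊤

/-- The nullity function `ν(X) = m·dim X − ρ(X)`. -/
noncomputable def nullity (m : ℕ) (rho : Submodule F (Fin n → F) → ℤ) (X : Submodule F (Fin n → F)) : ℤ :=
  (m : ℤ) * (finrank F X : ℤ) - rho X

/-- The conullity function `ν*(X) = ρ(E) − ρ(X^⊥)`. -/
def coNull (rho : Submodule F (Fin n → F) → ℤ) (X : Submodule F (Fin n → F)) : ℤ :=
  rho ⊤ - rho (perp X)

/-- The `r`-th generalized weight `d_r = min{dim X : ν*(X) ≥ r}`. -/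
noncomputable def genW (rho : Submodule F (Fin n → F) → ℤ) (r : ℤ) : ℕ :=
  sInf {d : ℕ | ∃ X : Submodule F (Fin n → F), finrank F X = d ∧ r ≤ coNull rho X}

/-- `h(x) = max{ν(X) : dim X = x}`. -/
noncomputable def hFun (m : ℕ) (rho : Submodule F (Fin n → F) → ℤ) (x : ℕ) : ℤ :=
  sSup {v : ℤ | ∃ X : Submodule F (Fin n → F), finrank F X = x ∧ v = nullity m rho X}

/-- `h*(x) = max{ν*(X) : dim X = x}`. -/
noncomputable def hStar (rho : Submodule F (Fin n → F) → ℤ) (x : ℕ) : ℤ :=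
  sSup {v : ℤ | ∃ X : Submodule F (Fin n → F), finrank F X = x ∧ v = coNull rho X}

/-- A `(q,m)`-polymatroid on `E = 𝔽_q^n`. -/
structure QMPolymatroid (F : Type*) [Field F] [Fintype F] (n m : ℕ) where
  rho : Submodule F (Fin n → F) → ℤ
  rho_nonneg : ∀ X, 0 ≤ rho X
  rho_le : ∀ X, rho X ≤ (m : ℤ) * (finrank F X : ℤ)
  rho_mono : ∀ ⦃X Y⦄, X ≤ Y → rho X ≤ rho Y
  rho_submodular : ∀ X Y, rho (X ⊔ Y) + rho (X ⊓ Y) ≤ rho X + rho Y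

/-- A `(q,m)`-demi-polymatroid on `E = 𝔽_q^n`. -/
structure QMDemiPolymatroid (F : Type*) [Field F] [Fintype F] (n m : ℕ) where
  rho : Submodule F (Fin n → F) → ℤ
  rho_nonneg : ∀ X, 0 ≤ rho X
  rho_le : ∀ X, rho X ≤ (m : ℤ) * (finrank F X : ℤ)
  rho_mono : ∀ ⦃X Y⦄, X ≤ Y → rho X ≤ rho Y
  dual_nonneg : ∀ X, 0 ≤ dualRho m rho X
  dual_le : ∀ X, dualRho m rho X ≤ (m : ℤ) * (finrank F X : ℤ)
  dual_mono : ∀ ⦃X Y⦄, X ≤ Y → dualRho m rho X ≤ dualRho m rho Y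

section Codes

variable {m : ℕ}

/-- The row space of a matrix. -/
def rowSpace (A : Matrix (Fin m) (Fin n) F) : Submodule F (Fin n → F) :=
  Submodule.span F (Set.range A)

theorem rowSpace_le_iff (A : Matrix (Fin m) (Fin n) F) (X : Submodule F (Fin n → F)) :
    rowSpace A ≤ X ↔ ∀ i, A i ∈ X := by
  rw [rowSpace, Submodule.span_le]; exact Set.range_subset_iff

/-- Matrices whose row space is contained in `X`. -/
def supportedOn (m : ℕ) (X : Submodule F (Fin n → F)) :
    Submodule F (Matrix (Fin m) (Fin n) F) where
  carrier := {A | rowSpace A ≤ X}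
  add_mem' := fun {A B} hA hB => by
    rw [Set.mem_setOf_eq, rowSpace_le_iff] at *
    exact fun i => X.add_mem (hA i) (hB i)
  zero_mem' := by
    rw [Set.mem_setOf_eq, rowSpace_le_iff]
    exact fun i => X.zero_mem
  smul_mem' := fun c A hA => by
    rw [Set.mem_setOf_eq, rowSpace_le_iff] at *
    exact fun i => X.smul_mem c (hA i)

/-- `C(X)`: the subspace of a Delsarte code `C` of matrices whose row space lies in `X`. -/
def subcode (C : Submodule F (Matrix (Fin m) (Fin n) F)) (X : Submodule F (Fin n → F)) :
    Submodule F (Matrix (Fin m) (Fin n) F) :=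
  C ⊓ supportedOn m X

/-- The rank function `ρ_C(X) = dim C − dim C(X^⊥)` of a Delsarte code. -/
noncomputable def rhoC (C : Submodule F (Matrix (Fin m) (Fin n) F))
    (X : Submodule F (Fin n → F)) : ℤ :=
  (finrank F C : ℤ) - (finrank F (subcode C (perp X)) : ℤ)

/-- The generalized weight `d_r(C) = min{dim X : dim C(X) ≥ r}` of a Delsarte code. -/
noncomputable def codeWeight (C : Submodule F (Matrix (Fin m) (Fin n) F)) (r : ℤ) : ℕ :=
  sInf {d : ℕ | ∃ X : Submodule F (Fin n → F),
    finrank F X = d ∧ r ≤ (finrank F (subcode C X) : ℤ)}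

/-- The trace dual of a Delsarte code. -/
def traceDual (C : Submodule F (Matrix (Fin m) (Fin n) F)) :
    Submodule F (Matrix (Fin m) (Fin n) F) where
  carrier := {N | ∀ M ∈ C, Matrix.trace (M * Nᵀ) = 0}
  add_mem' := fun {N₁ N₂} h1 h2 M hM => by
    rw [Matrix.transpose_add, Matrix.mul_add, Matrix.trace_add, h1 M hM, h2 M hM, add_zero]
  zero_mem' := fun M hM => by simp
  smul_mem' := fun c N hN M hM => by
    rw [Matrix.transpose_smul, Matrix.mul_smul, Matrix.trace_smul, hN M hM, smul_zero]

/-- The transposed code `Cᵀ = {Mᵗ : M ∈ C}` of a code of square matrices. -/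
def transposeCode (C : Submodule F (Matrix (Fin n) (Fin n) F)) :
    Submodule F (Matrix (Fin n) (Fin n) F) where
  carrier := {A | Aᵀ ∈ C}
  add_mem' := fun {A B} hA hB => by
    rw [Set.mem_setOf_eq, Matrix.transpose_add]; exact C.add_mem hA hB
  zero_mem' := by
    rw [Set.mem_setOf_eq, Matrix.transpose_zero]; exact C.zero_mem
  smul_mem' := fun c A hA => by
    rw [Set.mem_setOf_eq, Matrix.transpose_smul]; exact C.smul_mem c hA

/-- The maximum rank of a matrix in a subspace of matrices. -/
noncomputable def maxrank (A : Submodule F (Matrix (Fin m) (Fin n) F)) : ℕ :=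
  sSup {r : ℕ | ∃ M ∈ A, M.rank = r}

/-- An optimal anticode: a subspace `𝒜` of `𝕄` with `dim 𝒜 = m · maxrank 𝒜`. -/
def IsOptimalAnticode (A : Submodule F (Matrix (Fin m) (Fin n) F)) : Prop :=
  finrank F A = m * maxrank A

/-- Ravagnani's generalized weight `a_r(C)`. -/
noncomputable def aWeight (C : Submodule F (Matrix (Fin m) (Fin n) F)) (r : ℤ) : ℕ :=
  (sInf {d : ℕ | ∃ A : Submodule F (Matrix (Fin m) (Fin n) F),
    IsOptimalAnticode A ∧ finrank F A = d ∧ r ≤ (finrank F (A ⊓ C : Submodule F _) : ℤ)}) / m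

end Codes

/-!
The map `X ↦ X^⊥` is an inclusion-reversing involution of `Σ(E)` exchanging `⊔` and `⊓` with
`dim X^⊥ = n - dim X`, so `ρ*` is `ρ ∘ ⊥` plus the modular function `m · dim` up to a constant.
Submodularity of `ρ*` is therefore that of `ρ`. Monotonicity of `ρ*` (and with it nonnegativity,
as `ρ*(0) = 0`) amounts to `ρ(B) ≤ ρ(A) + m (dim B - dim A)` for `A ≤ B`, which follows from
submodularity and (R1) applied to a complement of `A` in `B`.
-/

noncomputable abbrev dotProductForm : LinearMap.BilinForm F (Fin n → F) :=
  dotProductBilin F F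

theorem dotProductForm_isRefl : (dotProductForm (F := F) (n := n)).IsRefl :=
  fun x y h => by rwa [dotProductBilin_apply_apply, dotProduct_comm] at h

theorem dotProductForm_nondegenerate : (dotProductForm (F := F) (n := n)).Nondegenerate :=
  ⟨fun _ hv => dotProduct_eq_zero_iff.mp hv,
    fun y hy => dotProduct_eq_zero_iff.mp fun x => dotProduct_comm y x ▸ hy x⟩

theorem perp_eq_orthogonal (X : Submodule F (Fin n → F)) :
    perp X = dotProductForm.orthogonal X := by
  ext x
  simp [perp, LinearMap.BilinForm.mem_orthogonal_iff, dotProduct_comm]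

theorem finrank_perp_add_finrank (X : Submodule F (Fin n → F)) :
    finrank F (perp X) + finrank F X = n := by
  have hX := Submodule.finrank_le X
  rw [finrank_fin_fun] at hX
  rw [perp_eq_orthogonal, LinearMap.BilinForm.finrank_orthogonal dotProductForm_nondegenerate,
    finrank_fin_fun]
  omega

theorem perp_perp (X : Submodule F (Fin n → F)) : perp (perp X) = X := by
  rw [perp_eq_orthogonal, perp_eq_orthogonal, LinearMap.BilinForm.orthogonal_orthogonal
    dotProductForm_nondegenerate dotProductForm_isRefl]

theorem perp_antitone : Antitone (perp (F := F) (n := n)) :=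
  fun _ _ h _ hx y hy => hx y (h hy)

@[simp]
theorem perp_bot : perp (⊥ : Submodule F (Fin n → F)) = ⊤ := by
  simp [perp_eq_orthogonal]

theorem perp_sup (X Y : Submodule F (Fin n → F)) : perp (X ⊔ Y) = perp X ⊓ perp Y := by
  refine le_antisymm (le_inf (perp_antitone le_sup_left) (perp_antitone le_sup_right)) ?_
  rintro x ⟨hxX, hxY⟩ z hz
  obtain ⟨y, hy, y', hy', rfl⟩ := Submodule.mem_sup.mp hz
  rw [dotProduct_add, hxX y hy, hxY y' hy', add_zero]

theorem perp_inf (X Y : Submodule F (Fin n → F)) : perp (X ⊓ Y) = perp X ⊔ perp Y := by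
  rw [← perp_perp (perp X ⊔ perp Y), perp_sup, perp_perp, perp_perp]

namespace QMPolymatroid

variable {m : ℕ} (P : QMPolymatroid F n m)

theorem rho_sup_le (X Y : Submodule F (Fin n → F)) : P.rho (X ⊔ Y) ≤ P.rho X + P.rho Y := by
  linarith [P.rho_submodular X Y, P.rho_nonneg (X ⊓ Y)]

theorem rho_le_add_of_le {X Y : Submodule F (Fin n → F)} (h : X ≤ Y) :
    P.rho Y ≤ P.rho X + m * ((finrank F Y : ℤ) - finrank F X) := by
  obtain ⟨Z, hXZ, rfl⟩ := IsModularLattice.exists_disjoint_and_sup_eq h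
  have hdim := Submodule.finrank_sup_add_finrank_inf_eq X Z
  rw [hXZ.eq_bot, finrank_bot, add_zero] at hdim
  have hZ := P.rho_le Z
  rw [hdim]
  push_cast
  linarith [P.rho_sup_le X Z]

theorem dualRho_bot : dualRho m P.rho ⊥ = 0 := by
  simp [dualRho]

theorem dualRho_mono {X Y : Submodule F (Fin n → F)} (h : X ≤ Y) :
    dualRho m P.rho X ≤ dualRho m P.rho Y := by
  have hgrow := P.rho_le_add_of_le (perp_antitone h)
  have hX := finrank_perp_add_finrank X
  have hY := finrank_perp_add_finrank Y
  have hdim : (finrank F (perp X) : ℤ) - finrank F (perp Y) = finrank F Y - finrank F X := by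
    omega
  rw [hdim] at hgrow
  unfold dualRho
  linarith

theorem dualRho_nonneg (X : Submodule F (Fin n → F)) : 0 ≤ dualRho m P.rho X :=
  P.dualRho_bot ▸ P.dualRho_mono bot_le

theorem dualRho_le (X : Submodule F (Fin n → F)) : dualRho m P.rho X ≤ m * finrank F X := by
  unfold dualRho
  linarith [P.rho_mono (le_top (a := perp X))]

theorem dualRho_submodular (X Y : Submodule F (Fin n → F)) :
    dualRho m P.rho (X ⊔ Y) + dualRho m P.rho (X ⊓ Y) ≤ dualRho m P.rho X + dualRho m P.rho Y := by
  have hdim : (finrank F ↥(X ⊔ Y) : ℤ) + finrank F ↥(X ⊓ Y) = finrank F X + finrank F Y := by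
    exact_mod_cast Submodule.finrank_sup_add_finrank_inf_eq X Y
  have hrho := P.rho_submodular (perp X) (perp Y)
  rw [← perp_sup, ← perp_inf] at hrho
  unfold dualRho
  linear_combination hrho + (m : ℤ) * hdim

end QMPolymatroid

/-- The dual rank function `ρ*` of a `(q,m)`-polymatroid satisfies (R1), (R2), (R3),
i.e. `(E, ρ*)` is again a `(q,m)`-polymatroid. -/
theorem dual_of_polymatroid_is_polymatroid {F : Type*} [Field F] [Fintype F] {n m : ℕ}
    (P : QMPolymatroid F n m) :
    (∀ X : Submodule F (Fin n → F), 0 ≤ dualRho m P.rho X) ∧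
    (∀ X : Submodule F (Fin n → F), dualRho m P.rho X ≤ (m : ℤ) * (finrank F X : ℤ)) ∧
    (∀ X Y : Submodule F (Fin n → F), X ≤ Y → dualRho m P.rho X ≤ dualRho m P.rho Y) ∧
    (∀ X Y : Submodule F (Fin n → F),
      dualRho m P.rho (X ⊔ Y) + dualRho m P.rho (X ⊓ Y)
        ≤ dualRho m P.rho X + dualRho m P.rho Y) :=
  ⟨P.dualRho_nonneg, P.dualRho_le, fun _ _ => P.dualRho_mono, P.dualRho_submodular⟩
end

section
/- Let P = (E, ρ) be a (q,m)-demi-polymatroid and let ρ*(X) = ρ(X^⊥) + m·dim X − ρ(E). Then the pair (E, ρ*) is also a (q,m)-demi-polymatroid, and moreover (ρ*)* = ρ. -/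
/-! Because `X ↦ X^⊥` is an involution with `dim X^⊥ = n - dim X` and `ρ(0) = 0`, the
`m · dim` terms cancel in `ρ**`, so `ρ** = ρ`. Hence the axioms required of `ρ*` as a rank
function are exactly the dual axioms of `ρ`, and vice versa. -/
set_option linter.unusedSectionVars false

open Module Matrix

variable {F : Type*} [Field F] [Fintype F] {n : ℕ}

theorem perp_eq_comap_dualAnnihilator (X : Submodule F (Fin n → F)) :
    perp X = X.dualAnnihilator.comap (dotProductEquiv F (Fin n)).toLinearMap := by
  ext x
  simp [perp]

theorem perp_top : perp (⊤ : Submodule F (Fin n → F)) = ⊥ := by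
  rw [perp_eq_comap_dualAnnihilator, Submodule.dualAnnihilator_top, Submodule.comap_bot,
    LinearEquiv.ker]

theorem dualRho_dualRho {m : ℕ} {rho : Submodule F (Fin n → F) → ℤ} (h : rho ⊥ = 0) :
    dualRho m (dualRho m rho) = rho := by
  funext X
  have hdim : (finrank F (perp X) : ℤ) + finrank F X = n := by
    exact_mod_cast finrank_perp_add_finrank X
  simp only [dualRho, perp_perp, perp_top, h, finrank_top, finrank_fin_fun]
  linear_combination (m : ℤ) * hdim

namespace QMDemiPolymatroid

variable {m : ℕ} (P : QMDemiPolymatroid F n m)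

theorem rho_bot : P.rho ⊥ = 0 :=
  le_antisymm (by simpa using P.rho_le ⊥) (P.rho_nonneg ⊥)

theorem dualRho_dualRho : dualRho m (dualRho m P.rho) = P.rho :=
  _root_.dualRho_dualRho P.rho_bot

noncomputable def dual : QMDemiPolymatroid F n m where
  rho := dualRho m P.rho
  rho_nonneg := P.dual_nonneg
  rho_le := P.dual_le
  rho_mono := P.dual_mono
  dual_nonneg := by rw [P.dualRho_dualRho]; exact P.rho_nonneg
  dual_le := by rw [P.dualRho_dualRho]; exact P.rho_le
  dual_mono := by rw [P.dualRho_dualRho]; exact P.rho_mono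

end QMDemiPolymatroid

/-- the dual of a `(q,m)`-demi-polymatroid is a `(q,m)`-demi-polymatroid,
and `(ρ*)* = ρ`. -/
theorem demi_dual_is_demi {F : Type*} [Field F] [Fintype F] {n m : ℕ}
    (P : QMDemiPolymatroid F n m) :
    (∃ D : QMDemiPolymatroid F n m, D.rho = dualRho m P.rho) ∧
    (∀ X : Submodule F (Fin n → F), dualRho m (dualRho m P.rho) X = P.rho X) :=
  ⟨⟨P.dual, rfl⟩, congrFun P.dualRho_dualRho⟩
end

section
/- Assume m = n. Let C be a Delsarte code in the space of m×n matrices over 𝔽_q, and define ρ(X) = min{ρ_C(X), ρ_{Cᵀ}(X)} for X ∈ Σ(E), where Cᵀ = {Mᵗ : M ∈ C}. Then P = (E, ρ) is a (q,m)-demi-polymatroid; its conullity function is given by ν*(X) = max{dim C(X), dim Cᵀ(X)} for X ∈ Σ(E); and its generalized weights satisfy d_r(P) = min{d_r(P(C)), d_r(P(Cᵀ))} for r = 1, …, ρ(E). -/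
set_option linter.unusedSectionVars false

open Module Matrix

variable {F : Type*} [Field F] [Fintype F] {n : ℕ}

/-! The dot product identifies `E` with its dual, so `X ↦ X^⊥` is an inclusion-reversing involution
with `dim X + dim X^⊥ = n`. Since `C(X) = C ∩ 𝕄(X)` with `dim 𝕄(X) = m · dim X`, enlarging `X` to `Y`
raises `dim C(X)` by at most `m (dim Y − dim X)`; this single inequality gives all axioms of a
demi-polymatroid for `ρ_C`. The axioms are stable under pointwise minimum of two rank functions
with the same total rank, and `ρ_C(E) = dim C = dim Cᵀ = ρ_{Cᵀ}(E)`. For such a minimum the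
conullity is the maximum of the conullities, so the set of dimensions defining `d_r` is the union
of the two sets defining `d_r(P(C))` and `d_r(P(Cᵀ))`. -/

section Perp

theorem perp_eq_dualCoannihilator (X : Submodule F (Fin n → F)) :
    perp X = (X.map (dotProductEquiv F (Fin n)).toLinearMap).dualCoannihilator := by
  ext x
  simp only [Submodule.mem_dualCoannihilator, Submodule.mem_map, forall_exists_index, and_imp,
    forall_apply_eq_imp_iff₂, LinearEquiv.coe_coe, dotProductEquiv_apply_apply]
  exact forall₂_congr fun y _ => by rw [dotProduct_comm]

theorem finrank_add_finrank_perp (X : Submodule F (Fin n → F)) :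
    finrank F X + finrank F (perp X) = n := by
  rw [perp_eq_dualCoannihilator, ← LinearEquiv.finrank_map_eq (dotProductEquiv F (Fin n)) X,
    Subspace.finrank_add_finrank_dualCoannihilator_eq, Module.finrank_fin_fun]

theorem perp_antitone_s15 {X Y : Submodule F (Fin n → F)} (h : X ≤ Y) : perp Y ≤ perp X :=
  fun _ hx y hy => hx y (h hy)

theorem le_perp_perp (X : Submodule F (Fin n → F)) : X ≤ perp (perp X) :=
  fun x hx y hy => by rw [dotProduct_comm]; exact hy x hx

end Perp

section Subcode

variable {m : ℕ}

def supportedOnEquivPi (m : ℕ) (X : Submodule F (Fin n → F)) :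
    supportedOn m X ≃ₗ[F] (Fin m → X) where
  toFun A i := ⟨A.1 i, (rowSpace_le_iff A.1 X).mp A.2 i⟩
  map_add' _ _ := rfl
  map_smul' _ _ := rfl
  invFun f := ⟨Matrix.of fun i => f i, (rowSpace_le_iff _ X).mpr fun i => (f i).2⟩
  left_inv _ := rfl
  right_inv _ := rfl

theorem finrank_supportedOn (m : ℕ) (X : Submodule F (Fin n → F)) :
    finrank F (supportedOn m X) = m * finrank F X := by
  rw [(supportedOnEquivPi m X).finrank_eq, Module.finrank_pi_fintype, Finset.sum_const,
    Finset.card_univ, Fintype.card_fin, smul_eq_mul]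

theorem supportedOn_mono {X Y : Submodule F (Fin n → F)} (h : X ≤ Y) :
    supportedOn m X ≤ supportedOn m Y :=
  fun _ hA => le_trans hA h

theorem supportedOn_top : supportedOn m (⊤ : Submodule F (Fin n → F)) = ⊤ :=
  eq_top_iff.mpr fun A _ => show rowSpace A ≤ ⊤ from le_top

theorem supportedOn_bot : supportedOn m (⊥ : Submodule F (Fin n → F)) = ⊥ := by
  rw [← Submodule.finrank_eq_zero (R := F), finrank_supportedOn, finrank_bot, mul_zero]

theorem subcode_top (C : Submodule F (Matrix (Fin m) (Fin n) F)) : subcode C ⊤ = C := by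
  rw [subcode, supportedOn_top, inf_top_eq]

theorem subcode_bot (C : Submodule F (Matrix (Fin m) (Fin n) F)) : subcode C ⊥ = ⊥ := by
  rw [subcode, supportedOn_bot, inf_bot_eq]

theorem subcode_mono (C : Submodule F (Matrix (Fin m) (Fin n) F))
    {X Y : Submodule F (Fin n → F)} (h : X ≤ Y) : subcode C X ≤ subcode C Y :=
  inf_le_inf_left C (supportedOn_mono h)

theorem finrank_subcode_le (C : Submodule F (Matrix (Fin m) (Fin n) F))
    (X : Submodule F (Fin n → F)) : finrank F (subcode C X) ≤ m * finrank F X :=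
  finrank_supportedOn m X ▸ Submodule.finrank_mono inf_le_right

theorem finrank_subcode_add_le (C : Submodule F (Matrix (Fin m) (Fin n) F))
    {X Y : Submodule F (Fin n → F)} (h : X ≤ Y) :
    finrank F (subcode C Y) + m * finrank F X ≤ finrank F (subcode C X) + m * finrank F Y := by
  have hinf : subcode C Y ⊓ supportedOn m X = subcode C X := by
    rw [subcode, subcode, inf_assoc, inf_eq_right.mpr (supportedOn_mono h)]
  have hsup : subcode C Y ⊔ supportedOn m X ≤ supportedOn m Y :=
    sup_le inf_le_right (supportedOn_mono h)
  have hdim := Submodule.finrank_sup_add_finrank_inf_eq (subcode C Y) (supportedOn m X)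
  rw [hinf, finrank_supportedOn] at hdim
  have := finrank_supportedOn m Y ▸ Submodule.finrank_mono hsup
  omega

end Subcode

section RankOfCode

variable {m : ℕ}

theorem rhoC_top (C : Submodule F (Matrix (Fin m) (Fin n) F)) :
    rhoC C (⊤ : Submodule F (Fin n → F)) = finrank F C := by
  rw [rhoC, perp_top, subcode_bot, finrank_bot, Nat.cast_zero, sub_zero]

theorem rhoC_perp (C : Submodule F (Matrix (Fin m) (Fin n) F)) (X : Submodule F (Fin n → F)) :
    rhoC C (perp X) = finrank F C - finrank F (subcode C X) := by
  rw [rhoC, perp_perp]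

theorem coNull_rhoC (C : Submodule F (Matrix (Fin m) (Fin n) F)) (X : Submodule F (Fin n → F)) :
    coNull (rhoC C) X = finrank F (subcode C X) := by
  rw [coNull, rhoC_top, rhoC_perp, sub_sub_cancel]

theorem coNull_rhoC_top (C : Submodule F (Matrix (Fin m) (Fin n) F)) :
    coNull (rhoC C) ⊤ = rhoC C ⊤ := by
  rw [coNull_rhoC, subcode_top, rhoC_top]

theorem dualRho_rhoC (C : Submodule F (Matrix (Fin m) (Fin n) F)) (X : Submodule F (Fin n → F)) :
    dualRho m (rhoC C) X = m * finrank F X - finrank F (subcode C X) := by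
  rw [dualRho, rhoC_top, rhoC_perp]; ring

noncomputable def demiPolymatroidOfCode (C : Submodule F (Matrix (Fin m) (Fin n) F)) :
    QMDemiPolymatroid F n m where
  rho := rhoC C
  rho_nonneg X := by
    have := Submodule.finrank_mono (show subcode C (perp X) ≤ C from inf_le_left)
    rw [rhoC]; omega
  rho_le X := by
    have hle := finrank_subcode_add_le C (le_top : perp X ≤ ⊤)
    rw [subcode_top, finrank_top, Module.finrank_fin_fun] at hle
    have hdim : m * n = m * finrank F X + m * finrank F (perp X) := by
      rw [← mul_add, finrank_add_finrank_perp]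
    rw [rhoC]; omega
  rho_mono X Y h := by
    have := Submodule.finrank_mono (subcode_mono C (perp_antitone_s15 h))
    rw [rhoC, rhoC]; omega
  dual_nonneg X := by
    have := finrank_subcode_le C X
    rw [dualRho_rhoC]; omega
  dual_le X := by
    rw [dualRho_rhoC]; omega
  dual_mono X Y h := by
    have := finrank_subcode_add_le C h
    rw [dualRho_rhoC, dualRho_rhoC]; omega

end RankOfCode

theorem finrank_transposeCode (C : Submodule F (Matrix (Fin n) (Fin n) F)) :
    finrank F (transposeCode C) = finrank F C := by
  have : transposeCode C = C.comap (transposeLinearEquiv (Fin n) (Fin n) F F).toLinearMap := rfl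
  rw [this, Submodule.comap_equiv_eq_map_symm, LinearEquiv.finrank_map_eq]

section Minimum

variable {m : ℕ} {ρ₁ ρ₂ : Submodule F (Fin n → F) → ℤ}

theorem dualRho_min (h : ρ₁ ⊤ = ρ₂ ⊤) (X : Submodule F (Fin n → F)) :
    dualRho m (fun Z => min (ρ₁ Z) (ρ₂ Z)) X = min (dualRho m ρ₁ X) (dualRho m ρ₂ X) := by
  simp only [dualRho, h, min_self]
  omega

theorem coNull_min (h : ρ₁ ⊤ = ρ₂ ⊤) (X : Submodule F (Fin n → F)) :
    coNull (fun Z => min (ρ₁ Z) (ρ₂ Z)) X = max (coNull ρ₁ X) (coNull ρ₂ X) := by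
  simp only [coNull, h, min_self]
  omega

theorem genW_min (h : ρ₁ ⊤ = ρ₂ ⊤) {r : ℤ} (h₁ : r ≤ coNull ρ₁ ⊤) (h₂ : r ≤ coNull ρ₂ ⊤) :
    genW (fun Z => min (ρ₁ Z) (ρ₂ Z)) r = min (genW ρ₁ r) (genW ρ₂ r) := by
  have hunion : {d : ℕ | ∃ X : Submodule F (Fin n → F),
        finrank F X = d ∧ r ≤ coNull (fun Z => min (ρ₁ Z) (ρ₂ Z)) X} =
      {d | ∃ X : Submodule F (Fin n → F), finrank F X = d ∧ r ≤ coNull ρ₁ X} ∪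
      {d | ∃ X : Submodule F (Fin n → F), finrank F X = d ∧ r ≤ coNull ρ₂ X} := by
    ext d
    simp only [coNull_min h, le_max_iff, Set.mem_ofPred_eq, Set.mem_union]
    constructor
    · rintro ⟨X, hX, hr | hr⟩
      exacts [Or.inl ⟨X, hX, hr⟩, Or.inr ⟨X, hX, hr⟩]
    · rintro (⟨X, hX, hr⟩ | ⟨X, hX, hr⟩)
      exacts [⟨X, hX, Or.inl hr⟩, ⟨X, hX, Or.inr hr⟩]
  have hne₁ : {d | ∃ X : Submodule F (Fin n → F), finrank F X = d ∧ r ≤ coNull ρ₁ X}.Nonempty :=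
    ⟨_, ⊤, rfl, h₁⟩
  have hne₂ : {d | ∃ X : Submodule F (Fin n → F), finrank F X = d ∧ r ≤ coNull ρ₂ X}.Nonempty :=
    ⟨_, ⊤, rfl, h₂⟩
  rw [genW, hunion, csInf_union (OrderBot.bddBelow _) hne₁ (OrderBot.bddBelow _) hne₂]
  rfl

def QMDemiPolymatroid.min (D₁ D₂ : QMDemiPolymatroid F n m) (h : D₁.rho ⊤ = D₂.rho ⊤) :
    QMDemiPolymatroid F n m where
  rho Z := Min.min (D₁.rho Z) (D₂.rho Z)
  rho_nonneg X := le_min (D₁.rho_nonneg X) (D₂.rho_nonneg X)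
  rho_le X := (min_le_left _ _).trans (D₁.rho_le X)
  rho_mono _ _ hXY := min_le_min (D₁.rho_mono hXY) (D₂.rho_mono hXY)
  dual_nonneg X := dualRho_min h X ▸ le_min (D₁.dual_nonneg X) (D₂.dual_nonneg X)
  dual_le X := dualRho_min h X ▸ (min_le_left _ _).trans (D₁.dual_le X)
  dual_mono X Y hXY := by
    rw [dualRho_min h, dualRho_min h]
    exact min_le_min (D₁.dual_mono hXY) (D₂.dual_mono hXY)

end Minimum

/-- for `m = n`, `ρ(X) = min{ρ_C(X), ρ_{Cᵀ}(X)}` defines a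
`(q,n)`-demi-polymatroid whose conullity is `max{dim C(X), dim Cᵀ(X)}` and whose
generalized weights are `min{d_r(P(C)), d_r(P(Cᵀ))}`. -/
theorem square_matrix_demi {F : Type*} [Field F] [Fintype F] {n : ℕ}
    (C : Submodule F (Matrix (Fin n) (Fin n) F)) :
    (∃ D : QMDemiPolymatroid F n n,
      ∀ X : Submodule F (Fin n → F),
        D.rho X = min (rhoC C X) (rhoC (transposeCode C) X)) ∧
    (∀ X : Submodule F (Fin n → F),
      coNull (fun Z => min (rhoC C Z) (rhoC (transposeCode C) Z)) X
        = max ((finrank F (subcode C X) : ℤ))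
            ((finrank F (subcode (transposeCode C) X) : ℤ))) ∧
    (∀ r : ℤ, 1 ≤ r → r ≤ min (rhoC C ⊤) (rhoC (transposeCode C) ⊤) →
      genW (fun Z => min (rhoC C Z) (rhoC (transposeCode C) Z)) r
        = min (genW (rhoC C) r) (genW (rhoC (transposeCode C)) r)) := by
  have htop : rhoC C ⊤ = rhoC (transposeCode C) ⊤ := by
    rw [rhoC_top, rhoC_top, finrank_transposeCode]
  refine ⟨⟨(demiPolymatroidOfCode C).min (demiPolymatroidOfCode (transposeCode C)) htop,
    fun X => rfl⟩, fun X => ?_, fun r _ hr => ?_⟩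
  · rw [coNull_min htop, coNull_rhoC, coNull_rhoC]
  · rw [le_min_iff, ← coNull_rhoC_top, ← coNull_rhoC_top] at hr
    exact genW_min htop hr.1 hr.2
end
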